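/- The function g(μ) = μ + σ·φ(−μ/σ)/(1 − Φ(−μ/σ)) (for fixed σ > 0) is monotonically nondecreasing in μ. -/

import Mathlib

/-!
With `λ(α) = φ(α) / (1 - Φ(α))` the inverse Mills ratio, `g(μ) = σ (λ(α) - α)` at `α = -μ/σ`, so it
suffices that `λ - id` is antitone. From `φ' = -α φ` one gets `λ' = λ (λ - α)`. The first two moments
of `φ` on `(α, ∞)` are `φ(α)` and `1 - Φ(α) + α φ(α)` (integration by parts), so Cauchy–Schwarz
against the weight `φ` on `(α, ∞)` (the nonnegative variance of a truncated normal) gives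
`λ (λ - α) ≤ 1`.
-/

open MeasureTheory Set

/-- standard normal density -/
noncomputable def phi (x : ℝ) : ℝ := (Real.sqrt (2 * Real.pi))⁻¹ * Real.exp (-x ^ 2 / 2)

/-- standard normal CDF -/
noncomputable def Phi (x : ℝ) : ℝ := ∫ u in Iio x, phi u

open Filter ProbabilityTheory

theorem sq_integral_mul_le_integral_mul_integral_sq_mul {α : Type*} [MeasurableSpace α]
    {μ : Measure α} {f w : α → ℝ} (hw : 0 ≤ᵐ[μ] w) (hw_int : Integrable w μ)
    (hfw : Integrable (fun x => f x * w x) μ) (hf2w : Integrable (fun x => f x ^ 2 * w x) μ) :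
    (∫ x, f x * w x ∂μ) ^ 2 ≤ (∫ x, w x ∂μ) * ∫ x, f x ^ 2 * w x ∂μ := by
  have hquad : ∀ c : ℝ, 0 ≤ (∫ x, w x ∂μ) * (c * c) + (-2 * ∫ x, f x * w x ∂μ) * c
      + ∫ x, f x ^ 2 * w x ∂μ := by
    intro c
    have hexpand : (fun x => (c - f x) ^ 2 * w x)
        = fun x => (c * c) * w x + (-2 * c) * (f x * w x) + f x ^ 2 * w x := by
      ext x; ring
    calc 0 ≤ ∫ x, (c - f x) ^ 2 * w x ∂μ :=
          integral_nonneg_of_ae (hw.mono fun x hx => mul_nonneg (sq_nonneg _) hx)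
      _ = _ := by
          have hlin : Integrable (fun x => (c * c) * w x + (-2 * c) * (f x * w x)) μ :=
            (hw_int.const_mul _).add (hfw.const_mul _)
          rw [hexpand, integral_add hlin hf2w, integral_add (hw_int.const_mul _) (hfw.const_mul _),
            integral_const_mul, integral_const_mul]
          ring
  have hdisc := discrim_le_zero hquad
  rw [discrim] at hdisc
  nlinarith

theorem integral_Ioi_of_hasDerivAt_of_integrableOn {E : Type*} [NormedAddCommGroup E]
    [NormedSpace ℝ E] [CompleteSpace E] {f f' : ℝ → E} {a : ℝ}
    (hderiv : ∀ x ∈ Ici a, HasDerivAt f (f' x) x) (hf' : IntegrableOn f' (Ioi a))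
    (hf : IntegrableOn f (Ioi a)) :
    ∫ x in Ioi a, f' x = -f a := by
  have hlim := tendsto_zero_of_hasDerivAt_of_integrableOn_Ioi
    (fun x hx => hderiv x (mem_Ici_of_Ioi hx)) hf' hf
  simpa using integral_Ioi_of_hasDerivAt_of_tendsto' hderiv hf' hlim

theorem phi_eq_gaussianPDFReal : phi = gaussianPDFReal 0 1 := by
  ext x
  simp [phi, gaussianPDFReal]

theorem phi_pos (x : ℝ) : 0 < phi x := by
  rw [phi_eq_gaussianPDFReal]
  exact gaussianPDFReal_pos 0 1 x one_ne_zero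

theorem continuous_phi : Continuous phi := by
  unfold phi
  fun_prop

theorem integrable_phi : Integrable phi := by
  rw [phi_eq_gaussianPDFReal]
  exact integrable_gaussianPDFReal 0 1

theorem integral_phi : ∫ x, phi x = 1 := by
  rw [phi_eq_gaussianPDFReal]
  exact integral_gaussianPDFReal_eq_one 0 one_ne_zero

theorem hasDerivAt_phi (x : ℝ) : HasDerivAt phi (-x * phi x) x := by
  have hexponent : HasDerivAt (fun x : ℝ => -x ^ 2 / 2) (-x) x := by
    refine ((hasDerivAt_pow 2 x).neg.div_const 2).congr_deriv ?_
    push_cast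
    ring
  refine ((hexponent.exp).const_mul (Real.sqrt (2 * Real.pi))⁻¹).congr_deriv ?_
  unfold phi
  ring

theorem integrable_pow_mul_phi (n : ℕ) : Integrable (fun t : ℝ => t ^ n * phi t) := by
  have h := (integrable_rpow_mul_exp_neg_mul_sq (b := 1 / 2) (by norm_num)
    (s := n) (by linarith [n.cast_nonneg (α := ℝ)])).const_mul (Real.sqrt (2 * Real.pi))⁻¹
  refine h.congr (Eventually.of_forall fun t => ?_)
  simp only [Real.rpow_natCast, phi]
  ring_nf

theorem integrable_mul_phi : Integrable (fun t : ℝ => t * phi t) := by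
  simpa using integrable_pow_mul_phi 1

theorem hasDerivAt_Phi (x : ℝ) : HasDerivAt Phi (phi x) x := by
  have hPhi : ∀ u, Phi u = Phi 0 + ∫ t in (0 : ℝ)..u, phi t := by
    intro u
    have h := intervalIntegral.integral_Iic_sub_Iic (μ := volume)
      integrable_phi.integrableOn integrable_phi.integrableOn (a := 0) (b := u)
    rw [integral_Iic_eq_integral_Iio, integral_Iic_eq_integral_Iio] at h
    unfold Phi
    linarith
  rw [show Phi = fun u => Phi 0 + ∫ t in (0 : ℝ)..u, phi t from funext hPhi]
  exact ((continuous_phi.integral_hasStrictDerivAt 0 x).hasDerivAt).const_add _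

theorem one_sub_Phi_eq_integral_Ioi (x : ℝ) : 1 - Phi x = ∫ u in Ioi x, phi u := by
  have h := intervalIntegral.integral_Iio_add_Ici (μ := volume) (b := x)
    integrable_phi.integrableOn integrable_phi.integrableOn
  rw [integral_phi, integral_Ici_eq_integral_Ioi] at h
  unfold Phi
  linarith

theorem one_sub_Phi_pos (x : ℝ) : 0 < 1 - Phi x := by
  rw [one_sub_Phi_eq_integral_Ioi,
    setIntegral_pos_iff_support_of_nonneg_ae (Eventually.of_forall fun t => (phi_pos t).le)
      integrable_phi.integrableOn,
    Function.support_eq_univ fun t => (phi_pos t).ne', univ_inter]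
  simp

theorem integral_Ioi_mul_phi (a : ℝ) : ∫ t in Ioi a, t * phi t = phi a := by
  have hderiv : ∀ x ∈ Ici a, HasDerivAt (fun t => -phi t) (x * phi x) x :=
    fun x _ => (hasDerivAt_phi x).neg.congr_deriv (by ring)
  simpa using integral_Ioi_of_hasDerivAt_of_integrableOn hderiv
    integrable_mul_phi.integrableOn integrable_phi.neg.integrableOn

theorem integral_Ioi_sq_mul_phi (a : ℝ) :
    ∫ t in Ioi a, t ^ 2 * phi t = (1 - Phi a) + a * phi a := by
  have hderiv : ∀ x ∈ Ici a,
      HasDerivAt (fun t => -(t * phi t)) (x ^ 2 * phi x - phi x) x := by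
    intro x _
    refine ((hasDerivAt_id x).mul (hasDerivAt_phi x)).neg.congr_deriv ?_
    simp only [id_eq]
    ring
  have h := integral_Ioi_of_hasDerivAt_of_integrableOn hderiv
    ((integrable_pow_mul_phi 2).sub integrable_phi).integrableOn
    integrable_mul_phi.neg.integrableOn
  rw [integral_sub (integrable_pow_mul_phi 2).integrableOn integrable_phi.integrableOn,
    ← one_sub_Phi_eq_integral_Ioi] at h
  linarith

theorem phi_sq_le_one_sub_Phi_mul (a : ℝ) :
    phi a ^ 2 ≤ (1 - Phi a) * ((1 - Phi a) + a * phi a) := by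
  have h := sq_integral_mul_le_integral_mul_integral_sq_mul (μ := volume.restrict (Ioi a))
    (f := id) (Eventually.of_forall fun t => (phi_pos t).le) integrable_phi.integrableOn
    integrable_mul_phi.integrableOn (integrable_pow_mul_phi 2).integrableOn
  simpa only [id, integral_Ioi_mul_phi, integral_Ioi_sq_mul_phi,
    ← one_sub_Phi_eq_integral_Ioi] using h

noncomputable def invMillsRatio (α : ℝ) : ℝ := phi α / (1 - Phi α)

theorem hasDerivAt_invMillsRatio (α : ℝ) :
    HasDerivAt invMillsRatio (invMillsRatio α * (invMillsRatio α - α)) α := by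
  have htail : HasDerivAt (fun a => 1 - Phi a) (-phi α) α := by
    simpa using (hasDerivAt_Phi α).const_sub 1
  have hm : 1 - Phi α ≠ 0 := (one_sub_Phi_pos α).ne'
  refine ((hasDerivAt_phi α).div htail hm).congr_deriv ?_
  unfold invMillsRatio
  field_simp
  ring

theorem invMillsRatio_mul_sub_le_one (α : ℝ) : invMillsRatio α * (invMillsRatio α - α) ≤ 1 := by
  have hm := one_sub_Phi_pos α
  unfold invMillsRatio
  rw [div_sub' hm.ne', div_mul_div_comm, div_le_one (by positivity)]
  nlinarith [phi_sq_le_one_sub_Phi_mul α]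

theorem antitone_invMillsRatio_sub_id : Antitone fun α => invMillsRatio α - α := by
  have hderiv (α : ℝ) : HasDerivAt (fun α => invMillsRatio α - α)
      (invMillsRatio α * (invMillsRatio α - α) - 1) α :=
    (hasDerivAt_invMillsRatio α).sub (hasDerivAt_id α)
  apply antitone_of_deriv_nonpos fun α => (hderiv α).differentiableAt
  intro α
  rw [(hderiv α).deriv]
  linarith [invMillsRatio_mul_sub_le_one α]

/-- For fixed `σ > 0`, `g(μ) = μ + σ·φ(−μ/σ)/(1 − Φ(−μ/σ))` is nondecreasing in `μ`. -/
theorem posterior_gap_monotone (σ : ℝ) (hσ : 0 < σ) :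
    Monotone (fun μ : ℝ => μ + σ * phi (-μ / σ) / (1 - Phi (-μ / σ))) := by
  have hg (μ : ℝ) : μ + σ * phi (-μ / σ) / (1 - Phi (-μ / σ))
      = σ * (invMillsRatio (-μ / σ) - -μ / σ) := by
    unfold invMillsRatio
    field_simp
    ring
  have hscale : Antitone fun μ : ℝ => -μ / σ :=
    fun μ₁ μ₂ h => div_le_div_of_nonneg_right (neg_le_neg h) hσ.le
  simp only [hg]
  exact (antitone_invMillsRatio_sub_id.comp hscale).const_mul hσ.le
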